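/- Let Δ⁺ = {(x,y) : 0 ≤ y ≤ √3 x, √3 x + y ≤ 6√3} be the triangle with vertices (0,0), (6,0), (3, 3√3) in ℝ², and μ(x,y) = y(3x² - y²) (proportional to the product over the three positive roots of A₂ of the pairing with (x,y)). Then ∫_{Δ⁺} μ > 0, and the barycenter b = (∫ p μ)/(∫ μ) satisfies both ⟨b - (3,√3), (1, 1/√3)⟩ > 0 and ⟨b - (3,√3), (1, -1/√3)⟩ > 0. -/

import Mathlib

open MeasureTheory

/-- The triangle with vertices (0,0), (6,0), (3, 3√3) in ℝ². -/
noncomputable def delta16 : Set (ℝ × ℝ) :=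
  convexHull ℝ {((0:ℝ), (0:ℝ)), ((6:ℝ), (0:ℝ)), ((3:ℝ), 3 * Real.sqrt 3)}

/-- The density `μ(x,y) = y (3x² - y²)`, proportional to the product over the three
positive roots of A₂ of the pairing with (x,y). -/
noncomputable def mu16 (p : ℝ × ℝ) : ℝ := p.2 * (3 * p.1 ^ 2 - p.2 ^ 2)

lemma hs3 : Real.sqrt 3 ^ 2 = 3 := Real.sq_sqrt (by norm_num)

lemma hs3pos : 0 < Real.sqrt 3 := Real.sqrt_pos.2 (by norm_num)

/-- The triangle as an explicit region sliced along the second coordinate. -/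
noncomputable def T16 : Set (ℝ × ℝ) :=
  {p : ℝ × ℝ | p.2 ∈ Set.Icc (0:ℝ) (3 * Real.sqrt 3) ∧
    p.1 ∈ Set.Icc (Real.sqrt 3 * p.2 / 3) (6 - Real.sqrt 3 * p.2 / 3)}

lemma delta16_eq : delta16 = T16 := by
  have hs := hs3
  have hsp := hs3pos
  apply le_antisymm
  · apply convexHull_min
    · intro v hv
      simp only [Set.mem_insert_iff, Set.mem_singleton_iff] at hv
      rcases hv with h | h | h <;> subst h <;>
        simp only [T16, Set.mem_setOf_eq, Set.mem_Icc] <;>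
        refine ⟨⟨by nlinarith, by nlinarith⟩, by nlinarith, by nlinarith⟩
    · intro p hp q hq u v hu hv huv
      simp only [T16, Set.mem_setOf_eq, Set.mem_Icc] at hp hq ⊢
      obtain ⟨⟨h1, h2⟩, h3, h4⟩ := hp
      obtain ⟨⟨g1, g2⟩, g3, g4⟩ := hq
      refine ⟨⟨?_, ?_⟩, ?_, ?_⟩ <;>
        simp only [Prod.fst_add, Prod.snd_add, Prod.smul_fst, Prod.smul_snd, smul_eq_mul] <;>
        nlinarith
  · intro p hp
    simp only [T16, Set.mem_setOf_eq, Set.mem_Icc] at hp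
    obtain ⟨⟨h1, h2⟩, h3, h4⟩ := hp
    set s : ℝ := Real.sqrt 3 with hsdef
    have hsum : (∑ i : Fin 3,
        (![(6 - p.1 - s * p.2 / 3) / 6, (p.1 - s * p.2 / 3) / 6, s * p.2 / 9] i) •
        (![((0:ℝ), (0:ℝ)), ((6:ℝ), (0:ℝ)), ((3:ℝ), 3 * s)] i)) = p := by
      simp only [Fin.sum_univ_three, Matrix.cons_val_zero, Matrix.cons_val_one, Matrix.head_cons,
        Matrix.cons_val_two, Matrix.tail_cons, Prod.smul_mk, smul_eq_mul, Prod.mk_add_mk]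
      refine Prod.ext ?_ ?_
      · simp only; ring
      · simp only; linear_combination (p.2 / 3) * hs
    rw [delta16, ← hsum]
    apply (convex_convexHull ℝ _).sum_mem
    · intro i _
      fin_cases i
      · show (0:ℝ) ≤ (6 - p.1 - s * p.2 / 3) / 6
        nlinarith
      · show (0:ℝ) ≤ (p.1 - s * p.2 / 3) / 6
        nlinarith
      · show (0:ℝ) ≤ s * p.2 / 9
        nlinarith
    · simp only [Fin.sum_univ_three, Matrix.cons_val_zero, Matrix.cons_val_one, Matrix.head_cons,
        Matrix.cons_val_two, Matrix.tail_cons]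
      ring
    · intro i _
      fin_cases i <;> exact subset_convexHull ℝ _ (by simp [hsdef])

lemma fubini16 (f : ℝ × ℝ → ℝ) (hf : Continuous f) :
    (∫ p in delta16, f p)
      = ∫ y in Set.Icc (0:ℝ) (3 * Real.sqrt 3),
          ∫ x in Set.Icc (Real.sqrt 3 * y / 3) (6 - Real.sqrt 3 * y / 3), f (x, y) := by
  have hcomp : IsCompact delta16 := (Set.toFinite _).isCompact_convexHull ℝ
  have hmeas : MeasurableSet delta16 := hcomp.measurableSet
  have hint : IntegrableOn f delta16 := hf.continuousOn.integrableOn_compact hcomp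
  have hint2 : Integrable (delta16.indicator f) (Measure.prod volume volume) := by
    rw [← MeasureTheory.Measure.volume_eq_prod]
    exact (integrable_indicator_iff hmeas).2 hint
  rw [← integral_indicator hmeas, MeasureTheory.Measure.volume_eq_prod, integral_prod_symm _ hint2]
  have step : ∀ y : ℝ, (∫ x, delta16.indicator f (x, y))
      = (Set.Icc (0:ℝ) (3 * Real.sqrt 3)).indicator
          (fun y => ∫ x in Set.Icc (Real.sqrt 3 * y / 3) (6 - Real.sqrt 3 * y / 3), f (x, y)) y := by
    intro y
    by_cases hy : y ∈ Set.Icc (0:ℝ) (3 * Real.sqrt 3)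
    · rw [Set.indicator_of_mem hy, ← integral_indicator measurableSet_Icc]
      congr 1
      funext x
      rw [delta16_eq]
      by_cases hx : x ∈ Set.Icc (Real.sqrt 3 * y / 3) (6 - Real.sqrt 3 * y / 3)
      · rw [Set.indicator_of_mem hx, Set.indicator_of_mem]
        exact ⟨hy, hx⟩
      · rw [Set.indicator_of_notMem hx, Set.indicator_of_notMem]
        exact fun h => hx h.2
    · rw [Set.indicator_of_notMem hy]
      have hz : ∀ x : ℝ, delta16.indicator f (x, y) = 0 := by
        intro x
        rw [delta16_eq]
        exact Set.indicator_of_notMem (fun h => hy h.1) f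
      simp [hz]
  simp_rw [step]
  rw [integral_indicator measurableSet_Icc]

lemma icc_int {a b : ℝ} (h : a ≤ b) (g : ℝ → ℝ) :
    (∫ x in Set.Icc a b, g x) = ∫ x in a..b, g x := by
  rw [intervalIntegral.integral_of_le h, MeasureTheory.integral_Icc_eq_integral_Ioc]

lemma poly_int (a b c0 c1 c2 c3 c4 c5 : ℝ) :
    (∫ x in a..b, (c0 + c1*x + c2*x^2 + c3*x^3 + c4*x^4 + c5*x^5)) =
      c0*(b-a) + c1*(b^2-a^2)/2 + c2*(b^3-a^3)/3 + c3*(b^4-a^4)/4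
        + c4*(b^5-a^5)/5 + c5*(b^6-a^6)/6 := by
  have key : ∀ x : ℝ, HasDerivAt
      (fun t : ℝ => c0*t + c1/2*t^2 + c2/3*t^3 + c3/4*t^4 + c4/5*t^5 + c5/6*t^6)
      (c0 + c1*x + c2*x^2 + c3*x^3 + c4*x^4 + c5*x^5) x := by
    intro x
    have h0 : HasDerivAt (fun t : ℝ => c0*t) c0 x := by
      simpa using (hasDerivAt_id x).const_mul c0
    have h1 : HasDerivAt (fun t : ℝ => c1/2*t^2) (c1*x) x := by
      have := (hasDerivAt_pow 2 x).const_mul (c1/2)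
      refine this.congr_deriv ?_
      push_cast; ring
    have h2 : HasDerivAt (fun t : ℝ => c2/3*t^3) (c2*x^2) x := by
      have := (hasDerivAt_pow 3 x).const_mul (c2/3)
      refine this.congr_deriv ?_
      push_cast; ring
    have h3 : HasDerivAt (fun t : ℝ => c3/4*t^4) (c3*x^3) x := by
      have := (hasDerivAt_pow 4 x).const_mul (c3/4)
      refine this.congr_deriv ?_
      push_cast; ring
    have h4 : HasDerivAt (fun t : ℝ => c4/5*t^5) (c4*x^4) x := by
      have := (hasDerivAt_pow 5 x).const_mul (c4/5)
      refine this.congr_deriv ?_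
      push_cast; ring
    have h5 : HasDerivAt (fun t : ℝ => c5/6*t^6) (c5*x^5) x := by
      have := (hasDerivAt_pow 6 x).const_mul (c5/6)
      refine this.congr_deriv ?_
      push_cast; ring
    exact ((((h0.add h1).add h2).add h3).add h4).add h5
  rw [intervalIntegral.integral_eq_sub_of_hasDerivAt (fun x _ => key x)
    ((Continuous.intervalIntegrable (by continuity) a b))]
  ring

lemma int0 : (∫ p in delta16, mu16 p) = 2916/5 := by
  have hs := hs3
  have hsp := hs3pos
  rw [fubini16 _ (by unfold mu16; fun_prop)]
  have e1 : Set.EqOn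
      (fun y => ∫ x in Set.Icc (Real.sqrt 3 * y / 3) (6 - Real.sqrt 3 * y / 3), mu16 (x, y))
      (fun y => 0 + 216*y + (-36*Real.sqrt 3)*y^2 + 0*y^3 + (4/9*Real.sqrt 3)*y^4 + 0*y^5)
      (Set.Icc (0:ℝ) (3 * Real.sqrt 3)) := by
    intro y hy
    obtain ⟨hy0, hy1⟩ := Set.mem_Icc.mp hy
    have hab : Real.sqrt 3 * y / 3 ≤ 6 - Real.sqrt 3 * y / 3 := by nlinarith
    simp only
    rw [icc_int hab]
    rw [show (fun x => mu16 (x, y))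
        = fun x => (-(y^3)) + 0*x + (3*y)*x^2 + 0*x^3 + 0*x^4 + 0*x^5 from
      funext fun x => by simp only [mu16]; ring]
    rw [poly_int]
    linear_combination (2*y^3 - 2/27*Real.sqrt 3*y^4) * hs
  rw [setIntegral_congr_fun measurableSet_Icc e1]
  rw [icc_int (by positivity), poly_int]
  linear_combination (972/5 + (-1296/5)*Real.sqrt 3^2 + 108/5*Real.sqrt 3^4) * hs

lemma int1 : (∫ p in delta16, p.1 * mu16 p) = 2187 := by
  have hs := hs3
  have hsp := hs3pos
  rw [fubini16 _ (by unfold mu16; fun_prop)]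
  have e1 : Set.EqOn
      (fun y => ∫ x in Set.Icc (Real.sqrt 3 * y / 3) (6 - Real.sqrt 3 * y / 3),
        (x, y).1 * mu16 (x, y))
      (fun y => 0 + 972*y + (-216*Real.sqrt 3)*y^2 + 36*y^3 + 0*y^4 + 0*y^5)
      (Set.Icc (0:ℝ) (3 * Real.sqrt 3)) := by
    intro y hy
    obtain ⟨hy0, hy1⟩ := Set.mem_Icc.mp hy
    have hab : Real.sqrt 3 * y / 3 ≤ 6 - Real.sqrt 3 * y / 3 := by nlinarith
    simp only
    rw [icc_int hab]
    rw [show (fun x => (x, y).1 * mu16 (x, y))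
        = fun x => 0 + (-(y^3))*x + 0*x^2 + (3*y)*x^3 + 0*x^4 + 0*x^5 from
      funext fun x => by simp only [mu16]; ring]
    rw [poly_int]
    linear_combination (18*y^3 - 2/3*Real.sqrt 3*y^4) * hs
  rw [setIntegral_congr_fun measurableSet_Icc e1]
  rw [icc_int (by positivity), poly_int]
  linear_combination (729 + (-1215)*Real.sqrt 3^2) * hs

lemma int2 : (∫ p in delta16, p.2 * mu16 p) = 729 * Real.sqrt 3 := by
  have hs := hs3
  have hsp := hs3pos
  rw [fubini16 _ (by unfold mu16; fun_prop)]
  have e1 : Set.EqOn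
      (fun y => ∫ x in Set.Icc (Real.sqrt 3 * y / 3) (6 - Real.sqrt 3 * y / 3),
        (x, y).2 * mu16 (x, y))
      (fun y => 0 + 0*y + 216*y^2 + (-36*Real.sqrt 3)*y^3 + 0*y^4 + (4/9*Real.sqrt 3)*y^5)
      (Set.Icc (0:ℝ) (3 * Real.sqrt 3)) := by
    intro y hy
    obtain ⟨hy0, hy1⟩ := Set.mem_Icc.mp hy
    have hab : Real.sqrt 3 * y / 3 ≤ 6 - Real.sqrt 3 * y / 3 := by nlinarith
    simp only
    rw [icc_int hab]
    rw [show (fun x => (x, y).2 * mu16 (x, y))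
        = fun x => (-(y^4)) + 0*x + (3*y^2)*x^2 + 0*x^3 + 0*x^4 + 0*x^5 from
      funext fun x => by simp only [mu16]; ring]
    rw [poly_int]
    linear_combination (2*y^4 - 2/27*Real.sqrt 3*y^5) * hs
  rw [setIntegral_congr_fun measurableSet_Icc e1]
  rw [icc_int (by positivity), poly_int]
  linear_combination (243*Real.sqrt 3 + (-567)*Real.sqrt 3^3 + 54*Real.sqrt 3^5) * hs

/-- K-stability verification for the variety of complete conics: the total mass
`∫ μ` is positive, and the barycenter `b = (∫ p μ)/(∫ μ)` satisfies
`⟨b - (3,√3), (1, 1/√3)⟩ > 0` and `⟨b - (3,√3), (1, -1/√3)⟩ > 0`. -/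
theorem stmt16 :
    0 < (∫ p in delta16, mu16 p) ∧
    ((∫ p in delta16, p.1 * mu16 p) / (∫ p in delta16, mu16 p) - 3) * 1
      + ((∫ p in delta16, p.2 * mu16 p) / (∫ p in delta16, mu16 p) - Real.sqrt 3)
        * (1 / Real.sqrt 3) > 0 ∧
    ((∫ p in delta16, p.1 * mu16 p) / (∫ p in delta16, mu16 p) - 3) * 1
      + ((∫ p in delta16, p.2 * mu16 p) / (∫ p in delta16, mu16 p) - Real.sqrt 3)
        * (-(1 / Real.sqrt 3)) > 0 := by
  have hsp := hs3pos
  have hsne : Real.sqrt 3 ≠ 0 := ne_of_gt hsp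
  rw [int0, int1, int2]
  have h2 : (729 * Real.sqrt 3 / (2916/5) - Real.sqrt 3) = Real.sqrt 3 / 4 := by ring
  have h3 : Real.sqrt 3 / 4 * (1 / Real.sqrt 3) = 1/4 := by
    field_simp
  refine ⟨by norm_num, ?_, ?_⟩ <;> rw [h2] <;> nlinarith [h3]
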